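/- For every S > 0 there exist constants ν > 0 and κ ≥ 1 (depending only on S) with the following property. Let n ≥ 2, r ≥ 1, partition the square [0,√n)² into congruent square cells of side r/√5 (assume √5·√n/r is an integer), and let V be a finite set of node labels with position maps x, x' : V → [0,√n)² such that ‖x(u) − x'(u)‖ ≤ τ·S for every u ∈ V, where τ is an integer with 1 ≤ τ ≤ ν·d(u,v), and suppose every cell contains at least one node under x and under x'. Let d and d' be the shortest-path distances of the geometric graphs with radius r on positions x and x' respectively. Then for all distinct u, v ∈ V: max{ d(u,v)/d'(u,v), d'(u,v)/d(u,v) } ≤ κ. -/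

import Mathlib

/-- The geometric graph on vertex set `ι` with positions `x : ι → ℝ²` and radius `r`:
distinct vertices are adjacent iff their Euclidean distance is less than `r`. -/
def geomGraph {ι : Type*} (x : ι → EuclideanSpace ℝ (Fin 2)) (r : ℝ) : SimpleGraph ι where
  Adj u v := u ≠ v ∧ dist (x u) (x v) < r
  symm := ⟨fun u v h => ⟨h.1.symm, by rw [dist_comm]; exact h.2⟩⟩
  loopless := ⟨fun u h => h.1 rfl⟩

/-- The square region `[0,√n) × [0,√n)` in which the network nodes live. -/
def netSquare (n : ℕ) : Set (EuclideanSpace ℝ (Fin 2)) :=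
  {p | p 0 ∈ Set.Ico 0 (Real.sqrt n) ∧ p 1 ∈ Set.Ico 0 (Real.sqrt n)}

/-- The square cell of side `s` with lower-left corner `(i·s, j·s)`. -/
def cell (s : ℝ) (i j : ℕ) : Set (EuclideanSpace ℝ (Fin 2)) :=
  {p | p 0 ∈ Set.Ico ((i : ℝ) * s) (((i : ℝ) + 1) * s) ∧
       p 1 ∈ Set.Ico ((j : ℝ) * s) (((j : ℝ) + 1) * s)}

lemma dist_sq_eq (p q : EuclideanSpace ℝ (Fin 2)) :
    dist p q ^ 2 = (p 0 - q 0) ^ 2 + (p 1 - q 1) ^ 2 := by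
  rw [EuclideanSpace.dist_eq, Real.sq_sqrt (by positivity)]
  simp [Fin.sum_univ_two, Real.dist_eq, sq_abs]

lemma coord_abs_le_dist (p q : EuclideanSpace ℝ (Fin 2)) (i : Fin 2) :
    |p i - q i| ≤ dist p q := by
  fin_cases i
  · show |p 0 - q 0| ≤ dist p q
    nlinarith [dist_sq_eq p q, dist_nonneg (x := p) (y := q), sq_abs (p 0 - q 0),
      sq_nonneg (p 1 - q 1), abs_nonneg (p 0 - q 0)]
  · show |p 1 - q 1| ≤ dist p q
    nlinarith [dist_sq_eq p q, dist_nonneg (x := p) (y := q), sq_abs (p 1 - q 1),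
      sq_nonneg (p 0 - q 0), abs_nonneg (p 1 - q 1)]

lemma interval_close {s a b : ℝ} {i i' : ℕ} (hs : 0 < s)
    (h1 : (i:ℝ)*s ≤ a) (h2 : a < ((i:ℝ)+1)*s)
    (h3 : (i':ℝ)*s ≤ b) (h4 : b < ((i':ℝ)+1)*s)
    (hii : i = i' ∨ i + 1 = i' ∨ i' + 1 = i) : |a - b| < 2*s := by
  rw [abs_sub_lt_iff]
  have c1 : i ≤ i' + 1 := by omega
  have c2 : i' ≤ i + 1 := by omega
  have c1' : (i:ℝ) ≤ (i':ℝ) + 1 := by exact_mod_cast c1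
  have c2' : (i':ℝ) ≤ (i:ℝ) + 1 := by exact_mod_cast c2
  constructor <;> nlinarith

lemma interval_close1 {s a b : ℝ} {i : ℕ} (hs : 0 < s)
    (h1 : (i:ℝ)*s ≤ a) (h2 : a < ((i:ℝ)+1)*s)
    (h3 : (i:ℝ)*s ≤ b) (h4 : b < ((i:ℝ)+1)*s) : |a - b| < s := by
  rw [abs_sub_lt_iff]; constructor <;> linarith

lemma idx_bound {s a b : ℝ} {i i' : ℕ} (hs : 0 < s)
    (h1 : (i:ℝ)*s ≤ a) (h2 : a < ((i:ℝ)+1)*s)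
    (h3 : (i':ℝ)*s ≤ b) (h4 : b < ((i':ℝ)+1)*s) :
    (((i - i') + (i' - i) : ℕ) : ℝ) * s ≤ |a - b| + s := by
  rcases le_total i i' with h | h
  · have he : ((i - i') + (i' - i) : ℕ) = i' - i := by omega
    rw [he, Nat.cast_sub h]
    have : b - a ≤ |a - b| := by
      rw [abs_sub_comm]; exact le_abs_self _
    nlinarith
  · have he : ((i - i') + (i' - i) : ℕ) = i - i' := by omega
    rw [he, Nat.cast_sub h]
    have : a - b ≤ |a - b| := le_abs_self _
    nlinarith

lemma cell_close {s : ℝ} (hs : 0 < s) {p q : EuclideanSpace ℝ (Fin 2)} {i j i' j' : ℕ}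
    (hp : p ∈ cell s i j) (hq : q ∈ cell s i' j')
    (hhoriz : i = i' ∨ i + 1 = i' ∨ i' + 1 = i)
    (hvert : j = j' ∨ j + 1 = j' ∨ j' + 1 = j)
    (hone : i = i' ∨ j = j') :
    dist p q < Real.sqrt 5 * s := by
  obtain ⟨⟨hp1, hp2⟩, hp3, hp4⟩ := hp
  obtain ⟨⟨hq1, hq2⟩, hq3, hq4⟩ := hq
  have hA : |p 0 - q 0| < 2*s := interval_close hs hp1 hp2 hq1 hq2 hhoriz
  have hB : |p 1 - q 1| < 2*s := interval_close hs hp3 hp4 hq3 hq4 hvert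
  have hone' : |p 0 - q 0| < s ∨ |p 1 - q 1| < s := by
    rcases hone with h | h
    · subst h; exact Or.inl (interval_close1 hs hp1 hp2 hq1 hq2)
    · subst h; exact Or.inr (interval_close1 hs hp3 hp4 hq3 hq4)
  have key : dist p q ^ 2 < (Real.sqrt 5 * s) ^ 2 := by
    rw [dist_sq_eq, mul_pow, Real.sq_sqrt (by norm_num : (5:ℝ) ≥ 0)]
    have e0 : (p 0 - q 0) ^ 2 = |p 0 - q 0| ^ 2 := (sq_abs _).symm
    have e1 : (p 1 - q 1) ^ 2 = |p 1 - q 1| ^ 2 := (sq_abs _).symm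
    rw [e0, e1]
    have a0 := abs_nonneg (p 0 - q 0)
    have a1 := abs_nonneg (p 1 - q 1)
    rcases hone' with h | h <;> nlinarith
  have h1 : 0 ≤ Real.sqrt 5 * s := by positivity
  exact lt_of_pow_lt_pow_left₀ 2 h1 key

lemma cell_find {s : ℝ} (hs : 0 < s) {k : ℕ} {t : ℝ} (h0 : 0 ≤ t) (hk : t < (k:ℝ) * s) :
    ∃ i : ℕ, i < k ∧ (i:ℝ) * s ≤ t ∧ t < ((i:ℝ)+1) * s := by
  refine ⟨⌊t / s⌋₊, ?_, ?_, ?_⟩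
  · rw [Nat.floor_lt (by positivity)]
    rw [div_lt_iff₀ hs]; linarith
  · rw [← le_div_iff₀ hs]; exact Nat.floor_le (by positivity)
  · rw [← div_lt_iff₀ hs]; exact Nat.lt_floor_add_one _

lemma hop {V : Type} (x : V → EuclideanSpace ℝ (Fin 2)) (r : ℝ) {a b : V}
    (h : dist (x a) (x b) < r) : ∃ p : (geomGraph x r).Walk a b, p.length ≤ 1 := by
  by_cases hab : a = b
  · subst hab; exact ⟨SimpleGraph.Walk.nil, by simp⟩
  · have hadj : (geomGraph x r).Adj a b := ⟨hab, h⟩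
    exact ⟨SimpleGraph.Walk.cons hadj SimpleGraph.Walk.nil, by simp⟩

lemma walk_dist {V : Type} (x : V → EuclideanSpace ℝ (Fin 2)) (r : ℝ) {a b : V}
    (p : (geomGraph x r).Walk a b) : dist (x a) (x b) ≤ (p.length : ℝ) * r := by
  induction p with
  | nil => simp
  | @cons a c b h p ih =>
    have h2 : dist (x a) (x c) < r := h.2
    have := dist_triangle (x a) (x c) (x b)
    simp only [SimpleGraph.Walk.length_cons]
    push_cast
    nlinarith [ih, h2, this]

lemma chain {V : Type} (x : V → EuclideanSpace ℝ (Fin 2)) {r s : ℝ} (hs : 0 < s)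
    (hr : r = Real.sqrt 5 * s) {k : ℕ}
    (hpop : ∀ i < k, ∀ j < k, ∃ u, x u ∈ cell s i j)
    (b : V) (i' j' : ℕ) (hi' : i' < k) (hj' : j' < k) (hb : x b ∈ cell s i' j') :
    ∀ m : ℕ, ∀ a i j, i < k → j < k → x a ∈ cell s i j →
      (i' - i) + (i - i') + (j' - j) + (j - j') = m →
      ∃ p : (geomGraph x r).Walk a b, p.length ≤ m + 1 := by
  intro m
  induction m with
  | zero =>
    intro a i j hi hj ha hm
    have hii : i = i' ∧ j = j' := by omega
    have hd : dist (x a) (x b) < r := by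
      rw [hr]
      exact cell_close hs ha hb (Or.inl hii.1) (Or.inl hii.2) (Or.inl hii.1)
    exact hop x r hd
  | succ m ih =>
    intro a i j hi hj ha hm
    rcases (by omega : i + 1 ≤ i' ∨ i' + 1 ≤ i ∨ (i = i' ∧ j + 1 ≤ j') ∨ (i = i' ∧ j' + 1 ≤ j))
      with h | h | ⟨h1, h2⟩ | ⟨h1, h2⟩
    · obtain ⟨w, hw⟩ := hpop (i+1) (by omega) j hj
      have hd : dist (x a) (x w) < r := by
        rw [hr]
        exact cell_close hs ha hw (Or.inr (Or.inl rfl)) (Or.inl rfl) (Or.inr rfl)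
      obtain ⟨p1, hp1⟩ := hop x r hd
      obtain ⟨p2, hp2⟩ := ih w (i+1) j (by omega) hj hw (by omega)
      exact ⟨p1.append p2, by rw [SimpleGraph.Walk.length_append]; omega⟩
    · obtain ⟨w, hw⟩ := hpop (i-1) (by omega) j hj
      have hd : dist (x a) (x w) < r := by
        rw [hr]
        exact cell_close hs ha hw (Or.inr (Or.inr (by omega))) (Or.inl rfl) (Or.inr rfl)
      obtain ⟨p1, hp1⟩ := hop x r hd
      obtain ⟨p2, hp2⟩ := ih w (i-1) j (by omega) hj hw (by omega)
      exact ⟨p1.append p2, by rw [SimpleGraph.Walk.length_append]; omega⟩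
    · obtain ⟨w, hw⟩ := hpop i hi (j+1) (by omega)
      have hd : dist (x a) (x w) < r := by
        rw [hr]
        exact cell_close hs ha hw (Or.inl rfl) (Or.inr (Or.inl rfl)) (Or.inl rfl)
      obtain ⟨p1, hp1⟩ := hop x r hd
      obtain ⟨p2, hp2⟩ := ih w i (j+1) hi (by omega) hw (by omega)
      exact ⟨p1.append p2, by rw [SimpleGraph.Walk.length_append]; omega⟩
    · obtain ⟨w, hw⟩ := hpop i hi (j-1) (by omega)
      have hd : dist (x a) (x w) < r := by
        rw [hr]
        exact cell_close hs ha hw (Or.inl rfl) (Or.inr (Or.inr (by omega))) (Or.inl rfl)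
      obtain ⟨p1, hp1⟩ := hop x r hd
      obtain ⟨p2, hp2⟩ := ih w i (j-1) hi (by omega) hw (by omega)
      exact ⟨p1.append p2, by rw [SimpleGraph.Walk.length_append]; omega⟩

lemma graph_bounds {V : Type} (x : V → EuclideanSpace ℝ (Fin 2)) {r s : ℝ} (hs : 0 < s)
    (hr : r = Real.sqrt 5 * s) {k n : ℕ} (hk : (k:ℝ) * s = Real.sqrt n)
    (hsq : ∀ u, x u ∈ netSquare n)
    (hpop : ∀ i < k, ∀ j < k, ∃ u, x u ∈ cell s i j) (u v : V) (huv : u ≠ v) :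
    1 ≤ (geomGraph x r).dist u v ∧
    dist (x u) (x v) ≤ ((geomGraph x r).dist u v : ℝ) * r ∧
    s * ((geomGraph x r).dist u v : ℝ) ≤ 2 * dist (x u) (x v) + 3 * s := by
  obtain ⟨⟨hu01, hu02⟩, hu11, hu12⟩ := hsq u
  obtain ⟨⟨hv01, hv02⟩, hv11, hv12⟩ := hsq v
  rw [← hk] at hu02 hu12 hv02 hv12
  obtain ⟨iu, hiu, hiu1, hiu2⟩ := cell_find hs hu01 hu02
  obtain ⟨ju, hju, hju1, hju2⟩ := cell_find hs hu11 hu12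
  obtain ⟨iv, hiv, hiv1, hiv2⟩ := cell_find hs hv01 hv02
  obtain ⟨jv, hjv, hjv1, hjv2⟩ := cell_find hs hv11 hv12
  have hcu : x u ∈ cell s iu ju := ⟨⟨hiu1, hiu2⟩, hju1, hju2⟩
  have hcv : x v ∈ cell s iv jv := ⟨⟨hiv1, hiv2⟩, hjv1, hjv2⟩
  set A : ℕ := (iu - iv) + (iv - iu) with hA
  set B : ℕ := (ju - jv) + (jv - ju) with hB
  obtain ⟨p, hp⟩ := chain x hs hr hpop v iv jv hiv hjv hcv (A + B) u iu ju hiu hju hcu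
    (by omega)
  have hreach : (geomGraph x r).Reachable u v := ⟨p⟩
  have hd1 : 1 ≤ (geomGraph x r).dist u v := hreach.pos_dist_of_ne huv
  refine ⟨hd1, ?_, ?_⟩
  · obtain ⟨q, hq⟩ := hreach.exists_walk_length_eq_dist
    have := walk_dist x r q
    rw [hq] at this
    exact this
  · have hdle : (geomGraph x r).dist u v ≤ A + B + 1 :=
      le_trans (SimpleGraph.dist_le p) hp
    have hdle' : ((geomGraph x r).dist u v : ℝ) ≤ (A : ℝ) + (B : ℝ) + 1 := by
      exact_mod_cast hdle
    have hAb : (A : ℝ) * s ≤ |x u 0 - x v 0| + s := idx_bound hs hiu1 hiu2 hiv1 hiv2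
    have hBb : (B : ℝ) * s ≤ |x u 1 - x v 1| + s := idx_bound hs hju1 hju2 hjv1 hjv2
    have h0 : |x u 0 - x v 0| ≤ dist (x u) (x v) := coord_abs_le_dist (x u) (x v) 0
    have h1 : |x u 1 - x v 1| ≤ dist (x u) (x v) := coord_abs_le_dist (x u) (x v) 1
    nlinarith [hdle', hAb, hBb, h0, h1, hs]


set_option maxHeartbeats 1000000 in
/-- **κ-smoothness under speed-limited mobility.** For every maximum speed `S` there are
constants `ν > 0` and `κ ≥ 1` such that if each node moves Euclidean distance at most
`τ·S` over `τ ≤ ν·d(u,v)` time steps and all cells stay populated, then the hop distance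
between any two distinct nodes `u, v` changes by a multiplicative factor at most `κ`. -/
theorem kappa_smooth (S : ℝ) (hS : 0 < S) :
    ∃ ν : ℝ, 0 < ν ∧ ∃ κ : ℝ, 1 ≤ κ ∧
    ∀ (n : ℕ), 2 ≤ n → ∀ (r : ℝ), 1 ≤ r →
    ∀ k : ℕ, (k : ℝ) * (r / Real.sqrt 5) = Real.sqrt n →
    ∀ (V : Type) [Fintype V], ∀ (x x' : V → EuclideanSpace ℝ (Fin 2)),
    (∀ u, x u ∈ netSquare n) → (∀ u, x' u ∈ netSquare n) →
    (∀ i < k, ∀ j < k, ∃ u, x u ∈ cell (r / Real.sqrt 5) i j) →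
    (∀ i < k, ∀ j < k, ∃ u, x' u ∈ cell (r / Real.sqrt 5) i j) →
    ∀ τ : ℕ, 1 ≤ τ →
    (∀ u, ‖x u - x' u‖ ≤ (τ : ℝ) * S) →
    ∀ u v : V, u ≠ v →
      (τ : ℝ) ≤ ν * ((geomGraph x r).dist u v : ℝ) →
      max (((geomGraph x r).dist u v : ℝ) / ((geomGraph x' r).dist u v : ℝ))
          (((geomGraph x' r).dist u v : ℝ) / ((geomGraph x r).dist u v : ℝ)) ≤ κ := by
  refine ⟨1/(40*S), by positivity, 16, by norm_num, ?_⟩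
  intro n hn r hrr k hk V _ x x' hsq hsq' hpop hpop' τ hτ hmove u v huv hτd
  have h5 : (0:ℝ) < Real.sqrt 5 := Real.sqrt_pos.mpr (by norm_num)
  set s := r / Real.sqrt 5 with hsdef
  have hrpos : (0:ℝ) < r := by linarith
  have hs : 0 < s := div_pos hrpos h5
  have hr : r = Real.sqrt 5 * s := by
    rw [hsdef]; field_simp
  obtain ⟨hd1, hlow, hup⟩ := graph_bounds x hs hr hk hsq hpop u v huv
  obtain ⟨hd1', hlow', hup'⟩ := graph_bounds x' hs hr hk hsq' hpop' u v huv
  set D := ((geomGraph x r).dist u v : ℝ) with hD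
  set D' := ((geomGraph x' r).dist u v : ℝ) with hD'
  have hD1 : 1 ≤ D := by rw [hD]; exact_mod_cast hd1
  have hD1' : 1 ≤ D' := by rw [hD']; exact_mod_cast hd1'
  have hm1 : dist (x u) (x' u) ≤ (τ:ℝ) * S := by rw [dist_eq_norm]; exact hmove u
  have hm2 : dist (x v) (x' v) ≤ (τ:ℝ) * S := by rw [dist_eq_norm]; exact hmove v
  have htri1 : dist (x' u) (x' v) ≤ dist (x u) (x v) + 2 * ((τ:ℝ)*S) := by
    have h4 := dist_triangle4 (x' u) (x u) (x v) (x' v)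
    rw [dist_comm (x' u) (x u)] at h4
    linarith
  have htri2 : dist (x u) (x v) ≤ dist (x' u) (x' v) + 2 * ((τ:ℝ)*S) := by
    have h4 := dist_triangle4 (x u) (x' u) (x' v) (x v)
    rw [dist_comm (x' v) (x v)] at h4
    linarith
  have hτS : (τ:ℝ) * S ≤ D / 40 := by
    have h1 := mul_le_mul_of_nonneg_right hτd (le_of_lt hS)
    have h2 : 1/(40*S) * D * S = D / 40 := by field_simp
    linarith [h2 ▸ h1]
  have hc2 : Real.sqrt 5 ^ 2 = 5 := Real.sq_sqrt (by norm_num)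
  have hcu : Real.sqrt 5 ≤ 9/4 := by nlinarith [h5]
  have hrs : 1 ≤ Real.sqrt 5 * s := hr ▸ hrr
  have hsl : (2:ℝ)/5 ≤ s := by nlinarith [h5, hs]
  have hrup : r ≤ (9/4) * s := by
    rw [hr]; nlinarith [hs]
  have hlow2 : dist (x u) (x v) ≤ D * ((9/4)*s) := by
    have := mul_le_mul_of_nonneg_left hrup (by linarith : (0:ℝ) ≤ D)
    linarith
  have hlow2' : dist (x' u) (x' v) ≤ D' * ((9/4)*s) := by
    have := mul_le_mul_of_nonneg_left hrup (by linarith : (0:ℝ) ≤ D')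
    linarith
  have hsD : (2/5) * D ≤ s * D :=
    mul_le_mul_of_nonneg_right hsl (by linarith)
  have hsD' : (2/5) * D' ≤ s * D' :=
    mul_le_mul_of_nonneg_right hsl (by linarith)
  have hsD1 : s ≤ s * D := by nlinarith
  have hsD1' : s ≤ s * D' := by nlinarith
  have key1 : s * D ≤ s * (16 * D') := by nlinarith [hup, htri2, hlow2', hτS, hsD, hsD1']
  have key2 : s * D' ≤ s * (16 * D) := by nlinarith [hup', htri1, hlow2, hτS, hsD, hsD1]
  have k1 : D ≤ 16 * D' := le_of_mul_le_mul_left key1 hs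
  have k2 : D' ≤ 16 * D := le_of_mul_le_mul_left key2 hs
  rw [max_le_iff]
  constructor
  · rw [div_le_iff₀ (by linarith : (0:ℝ) < D')]; linarith
  · rw [div_le_iff₀ (by linarith : (0:ℝ) < D)]; linarith
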